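/- arXiv:1308.0751 — 3 statements merged into one kernel-verified Lean document; each statement's English description precedes it below -/
import Mathlib

section
/- For k ≥ 2 and positive integers n₁,…,n_k, d₁,…,d_k, the equality d₁^{n₁}⋯d_k^{n_k} · (n₁+⋯+n_k)!/(n₁!⋯n_k!) = C(n₁+d₁,n₁)⋯C(n_k+d_k,n_k) − n₁ − ⋯ − n_k + 1 holds if and only if k = 2 and either (n₁ = 1 and d₂ = 1) or (n₂ = 1 and d₁ = 1). -/
lemma choose_ge_sub (m k : ℕ) (hk : 1 ≤ k) (h : k ≤ m) : m - k + 1 ≤ m.choose k := by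
  have h1 : m.choose (m - k) = m.choose k := Nat.choose_symm h
  have h2 : (m - k + 1).choose (m - k) ≤ m.choose (m - k) :=
    Nat.choose_le_choose (m - k) (by omega)
  rw [Nat.choose_succ_self_right] at h2
  omega

lemma choose_rec (n d : ℕ) : (n + 1) * (n + 1 + d).choose (n + 1) = (n + d + 1) * (n + d).choose n := by
  have h := Nat.add_one_mul_choose_eq (n + d) n
  have e : n + 1 + d = n + d + 1 := by ring
  rw [e]
  linarith [h]

lemma pascal (m b : ℕ) : (m + 1 + b).choose (m + 1) = (m + b).choose m + (m + b).choose (m + 1) := by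
  have h := Nat.choose_succ_succ (m + b) m
  simp only [Nat.succ_eq_add_one] at h
  rw [show m + 1 + b = m + b + 1 by ring]
  exact h

lemma choose_two (d : ℕ) : 2 * ((d + 2).choose 2) = (d + 2) * (d + 1) := by
  induction d with
  | zero => decide
  | succ e ih =>
    have h := Nat.choose_succ_succ (e + 2) 1
    simp only [Nat.succ_eq_add_one, Nat.choose_one_right] at h
    -- h : (e+3).choose 2 = (e+2) + (e+2).choose 2
    have e1 : e + 1 + 2 = e + 2 + 1 := by ring
    rw [e1, h]
    ring_nf
    ring_nf at ih
    omega

-- Lemma A : C(n+d,n) ≤ d^(n-1) * (n+d)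
lemma chooseA : ∀ n d : ℕ, 1 ≤ n → 1 ≤ d → (n + d).choose n ≤ d ^ (n - 1) * (n + d) := by
  intro n
  induction n with
  | zero => omega
  | succ m ih =>
    intro d _ hd
    rcases Nat.eq_zero_or_pos m with rfl | hm
    · simp [Nat.choose_one_right]
    · have key := choose_rec m d
      have h1 : (m + d).choose m ≤ d ^ (m - 1) * (m + d) := ih d hm hd
      have h2 : (m + 1) * ((m + 1 + d).choose (m + 1)) ≤ (m + d + 1) * (d ^ (m - 1) * (m + d)) := by
        rw [key]; exact Nat.mul_le_mul_left _ h1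
      have h3 : (m + d + 1) * (d ^ (m - 1) * (m + d)) ≤ (m + 1) * (d ^ m * (m + 1 + d)) := by
        have e : d ^ m = d ^ (m - 1) * d := by
          conv_lhs => rw [show m = (m - 1) + 1 by omega]
          rw [pow_succ]
        rw [e]
        have hp := pow_pos (show 0 < d by omega) (m - 1)
        have hdd : m + d ≤ (m + 1) * d := by nlinarith
        calc (m + d + 1) * (d ^ (m - 1) * (m + d))
            ≤ (m + d + 1) * (d ^ (m - 1) * ((m + 1) * d)) := by
              exact Nat.mul_le_mul_left _ (Nat.mul_le_mul_left _ hdd)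
          _ = (m + 1) * (d ^ (m - 1) * d * (m + 1 + d)) := by ring
      have := le_trans h2 h3
      exact Nat.le_of_mul_le_mul_left this (by omega)

-- Lemma A' : n,d ≥ 2 → C(n+d,n) ≤ d^(n-1) * (n+d-1)
lemma chooseA' : ∀ n d : ℕ, 2 ≤ n → 2 ≤ d → (n + d).choose n ≤ d ^ (n - 1) * (n + d - 1) := by
  intro n
  induction n with
  | zero => omega
  | succ m ih =>
    intro d hm2 hd
    obtain ⟨e, rfl⟩ : ∃ e, d = e + 2 := ⟨d - 2, by omega⟩
    rcases Nat.lt_or_ge m 2 with hm | hm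
    · have hm1 : m = 1 := by omega
      subst hm1
      have key := choose_two (e + 2)
      have e1 : 1 + 1 + (e + 2) = e + 2 + 2 := by ring
      have e2 : (1 + 1 : ℕ) = 2 := rfl
      rw [e1, e2]
      have e3 : (2 : ℕ) - 1 = 1 := rfl
      have e4 : e + 2 + 2 - 1 = e + 3 := by omega
      rw [e3, e4, pow_one]
      nlinarith [key]
    · have key := choose_rec m (e + 2)
      have h1 := ih (e + 2) hm hd
      have h2 : (m + 1) * ((m + 1 + (e + 2)).choose (m + 1))
          ≤ (m + (e + 2) + 1) * ((e + 2) ^ (m - 1) * (m + (e + 2) - 1)) := by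
        rw [key]; exact Nat.mul_le_mul_left _ h1
      have h3 : (m + (e + 2) + 1) * ((e + 2) ^ (m - 1) * (m + (e + 2) - 1))
          ≤ (m + 1) * ((e + 2) ^ m * (m + 1 + (e + 2) - 1)) := by
        have ep : (e + 2) ^ m = (e + 2) ^ (m - 1) * (e + 2) := by
          conv_lhs => rw [show m = (m - 1) + 1 by omega]
          rw [pow_succ]
        rw [ep]
        have e1 : m + (e + 2) - 1 = m + e + 1 := by omega
        have e2 : m + 1 + (e + 2) - 1 = m + e + 2 := by omega
        rw [e1, e2]
        have hp := pow_pos (show 0 < e + 2 by omega) (m - 1)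
        have hkey : (m + e + 3) * (m + e + 1) ≤ (m + 1) * ((e + 2) * (m + e + 2)) := by
          have hA : m + e + 3 ≤ (m + 1) * (e + 2) := by nlinarith
          calc (m + e + 3) * (m + e + 1) ≤ ((m + 1) * (e + 2)) * (m + e + 2) :=
                Nat.mul_le_mul hA (by omega)
            _ = (m + 1) * ((e + 2) * (m + e + 2)) := by ring
        calc (m + (e + 2) + 1) * ((e + 2) ^ (m - 1) * (m + e + 1))
            = (e + 2) ^ (m - 1) * ((m + e + 3) * (m + e + 1)) := by ring
          _ ≤ (e + 2) ^ (m - 1) * ((m + 1) * ((e + 2) * (m + e + 2))) := Nat.mul_le_mul_left _ hkey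
          _ = (m + 1) * ((e + 2) ^ (m - 1) * (e + 2) * (m + e + 2)) := by ring
      have := le_trans h2 h3
      exact Nat.le_of_mul_le_mul_left this (by omega)

-- Lemma B : a,b ≥ 1 → ab + 1 ≤ C(a+b, a)
lemma chooseB : ∀ a b : ℕ, 1 ≤ a → 1 ≤ b → a * b + 1 ≤ (a + b).choose a := by
  intro a
  induction a with
  | zero => omega
  | succ m ih =>
    intro b _ hb
    rcases Nat.eq_zero_or_pos m with rfl | hm
    · simp [Nat.choose_one_right]
    · have h1 := ih b hm hb
      have h2 : b ≤ (m + b).choose (m + 1) := by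
        have := choose_ge_sub (m + b) (m + 1) (by omega) (by omega)
        omega
      rw [pascal]; nlinarith

-- Lemma B' : a,b ≥ 2 → ab + 2 ≤ C(a+b, a)
lemma chooseB' : ∀ a b : ℕ, 2 ≤ a → 2 ≤ b → a * b + 2 ≤ (a + b).choose a := by
  intro a
  induction a with
  | zero => omega
  | succ m ih =>
    intro b hm2 hb
    rcases Nat.lt_or_ge m 2 with hm | hm
    · have hm1 : m = 1 := by omega
      subst hm1
      have key := choose_two (b - 2)
      have e1 : b - 2 + 2 = b := by omega
      rw [e1] at key
      -- key : 2 * (b.choose 2) = b * (b-1)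
      have e2 : 1 + 1 + b = b + 2 := by ring
      have e3 : (1 + 1 : ℕ) = 2 := rfl
      rw [e2, e3]
      have key2 := choose_two b
      -- key2 : 2 * ((b+2).choose 2) = (b+2)*(b+1)
      nlinarith
    · have h1 := ih b hm hb
      have h2 : b ≤ (m + b).choose (m + 1) := by
        have := choose_ge_sub (m + b) (m + 1) (by omega) (by omega)
        omega
      rw [pascal]; nlinarith


-- equality case
lemma baseEq (b p : ℕ) :
    (1 + p).choose 1 * ((b + 1).choose b) = p ^ 1 * 1 ^ b * ((1 + b).choose 1) + (1 + b) := by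
  rw [Nat.choose_one_right, Nat.choose_succ_self_right, Nat.choose_one_right]
  ring

-- strict case
lemma baseStrict (a b p q : ℕ) (ha : 1 ≤ a) (hb : 1 ≤ b) (hp : 1 ≤ p) (hq : 1 ≤ q)
    (hpat : ¬((a = 1 ∧ q = 1) ∨ (b = 1 ∧ p = 1))) :
    (a + p).choose a * ((b + q).choose b) < p ^ a * q ^ b * ((a + b).choose a) + (a + b) := by
  push_neg at hpat
  obtain ⟨h1, h2⟩ := hpat
  rcases Nat.lt_or_ge a 2 with ha2 | ha2
  · -- a = 1
    have ha1 : a = 1 := by omega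
    subst ha1
    have hq2 : 2 ≤ q := by omega
    rcases Nat.lt_or_ge b 2 with hb2 | hb2
    · -- b = 1
      have hb1 : b = 1 := by omega
      subst hb1
      have hp2 : 2 ≤ p := by omega
      simp only [Nat.choose_one_right, Nat.choose_succ_self_right, pow_one]
      obtain ⟨p2, rfl⟩ : ∃ x, p = x + 2 := ⟨p - 2, by omega⟩
      obtain ⟨q2, rfl⟩ : ∃ x, q = x + 2 := ⟨q - 2, by omega⟩
      nlinarith [Nat.zero_le (p2 * q2)]
    · -- b ≥ 2, q ≥ 2
      have hc2 := chooseA' b q hb2 hq2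
      rw [Nat.choose_one_right, Nat.choose_one_right]
      obtain ⟨b', rfl⟩ : ∃ b', b = b' + 2 := ⟨b - 2, by omega⟩
      obtain ⟨q', rfl⟩ : ∃ q', q = q' + 2 := ⟨q - 2, by omega⟩
      have hQ : 0 < (q' + 2) ^ (b' + 1) := pow_pos (by omega) _
      have epow : (q' + 2) ^ (b' + 2) = (q' + 2) ^ (b' + 1) * (q' + 2) := pow_succ _ _
      have esub : b' + 2 + (q' + 2) - 1 = b' + q' + 3 := by omega
      rw [esub] at hc2
      have hsub : (b' + 2 + (q' + 2) - 1) = b' + q' + 3 := by omega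
      have echoose : (b' + 2 + (q' + 2)).choose (b' + 2) ≤ (q' + 2) ^ (b' + 2 - 1) * (b' + q' + 3) := hc2
      have e1 : (b' + 2 : ℕ) - 1 = b' + 1 := by omega
      rw [e1] at echoose
      -- goal : (1+p) * C ≤ ... < p^1 * q^b * (1 + b) + (1 + b)
      calc (1 + p) * ((b' + 2 + (q' + 2)).choose (b' + 2))
          ≤ (1 + p) * ((q' + 2) ^ (b' + 1) * (b' + q' + 3)) := Nat.mul_le_mul_left _ echoose
        _ < p ^ 1 * (q' + 2) ^ (b' + 2) * (1 + (b' + 2)) + (1 + (b' + 2)) := by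
            rw [pow_one, epow]
            have hkey : (1 + p) * (b' + q' + 3) ≤ p * ((q' + 2) * (b' + 3)) := by
              obtain ⟨p2, rfl⟩ : ∃ x, p = x + 1 := ⟨p - 1, by omega⟩
              nlinarith [Nat.zero_le (p2 * q' * b'), Nat.zero_le (p2 * q'), Nat.zero_le (p2 * b'),
                Nat.zero_le (q' * b'), Nat.zero_le p2, Nat.zero_le q', Nat.zero_le b']
            calc (1 + p) * ((q' + 2) ^ (b' + 1) * (b' + q' + 3))
                = (q' + 2) ^ (b' + 1) * ((1 + p) * (b' + q' + 3)) := by ring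
              _ ≤ (q' + 2) ^ (b' + 1) * (p * ((q' + 2) * (b' + 3))) := Nat.mul_le_mul_left _ hkey
              _ = p * ((q' + 2) ^ (b' + 1) * (q' + 2)) * (1 + (b' + 2)) := by ring
              _ < p * ((q' + 2) ^ (b' + 1) * (q' + 2)) * (1 + (b' + 2)) + (1 + (b' + 2)) := by omega
  · -- a ≥ 2
    rcases Nat.lt_or_ge b 2 with hb2 | hb2
    · -- b = 1, so p ≥ 2
      have hb1 : b = 1 := by omega
      subst hb1
      have hp2 : 2 ≤ p := by omega
      have hc1 := chooseA' a p ha2 hp2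
      rw [Nat.choose_one_right]
      obtain ⟨a', rfl⟩ : ∃ a', a = a' + 2 := ⟨a - 2, by omega⟩
      obtain ⟨p', rfl⟩ : ∃ p', p = p' + 2 := ⟨p - 2, by omega⟩
      have esub : a' + 2 + (p' + 2) - 1 = a' + p' + 3 := by omega
      have e1 : (a' + 2 : ℕ) - 1 = a' + 1 := by omega
      rw [esub, e1] at hc1
      have epow : (p' + 2) ^ (a' + 2) = (p' + 2) ^ (a' + 1) * (p' + 2) := pow_succ _ _
      have hM : (a' + 2 + 1).choose (a' + 2) = a' + 3 := Nat.choose_succ_self_right _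
      rw [hM]
      calc (a' + 2 + (p' + 2)).choose (a' + 2) * (1 + q)
          ≤ ((p' + 2) ^ (a' + 1) * (a' + p' + 3)) * (1 + q) := Nat.mul_le_mul_right _ hc1
        _ < (p' + 2) ^ (a' + 2) * q ^ 1 * (a' + 3) + (a' + 2 + 1) := by
            rw [pow_one, epow]
            have hkey : (a' + p' + 3) * (1 + q) ≤ (p' + 2) * (q * (a' + 3)) := by
              obtain ⟨q2, rfl⟩ : ∃ x, q = x + 1 := ⟨q - 1, by omega⟩
              nlinarith [Nat.zero_le (p' * a' * q2), Nat.zero_le (p' * q2), Nat.zero_le (a' * q2),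
                Nat.zero_le (p' * a'), Nat.zero_le q2, Nat.zero_le p', Nat.zero_le a']
            calc (p' + 2) ^ (a' + 1) * (a' + p' + 3) * (1 + q)
                = (p' + 2) ^ (a' + 1) * ((a' + p' + 3) * (1 + q)) := by ring
              _ ≤ (p' + 2) ^ (a' + 1) * ((p' + 2) * (q * (a' + 3))) :=
                  Nat.mul_le_mul_left _ hkey
              _ = (p' + 2) ^ (a' + 1) * (p' + 2) * q * (a' + 3) := by ring
              _ < (p' + 2) ^ (a' + 1) * (p' + 2) * q * (a' + 3) + (a' + 2 + 1) := by omega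
    · -- a ≥ 2, b ≥ 2
      have hM := chooseB' a b ha2 hb2
      rcases Nat.lt_or_ge (p + q) 3 with hpq | hpq
      · -- p = q = 1
        have hp1 : p = 1 := by omega
        have hq1 : q = 1 := by omega
        subst hp1; subst hq1
        have hc1 : (a + 1).choose a = a + 1 := Nat.choose_succ_self_right _
        have hc2 : (b + 1).choose b = b + 1 := Nat.choose_succ_self_right _
        rw [hc1, hc2, one_pow, one_pow]
        nlinarith
      · rcases Nat.lt_or_ge q 2 with hq2 | hq2
        · -- q = 1, p ≥ 2
          have hq1 : q = 1 := by omega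
          subst hq1
          have hp2 : 2 ≤ p := by omega
          have hc1 := chooseA' a p ha2 hp2
          have hc2 : (b + 1).choose b = b + 1 := Nat.choose_succ_self_right _
          rw [hc2, one_pow]
          obtain ⟨a', rfl⟩ : ∃ a', a = a' + 2 := ⟨a - 2, by omega⟩
          obtain ⟨p', rfl⟩ : ∃ p', p = p' + 2 := ⟨p - 2, by omega⟩
          obtain ⟨b', rfl⟩ : ∃ b', b = b' + 2 := ⟨b - 2, by omega⟩
          have esub : a' + 2 + (p' + 2) - 1 = a' + p' + 3 := by omega
          have e1 : (a' + 2 : ℕ) - 1 = a' + 1 := by omega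
          rw [esub, e1] at hc1
          have epow : (p' + 2) ^ (a' + 2) = (p' + 2) ^ (a' + 1) * (p' + 2) := pow_succ _ _
          calc (a' + 2 + (p' + 2)).choose (a' + 2) * (b' + 2 + 1)
              ≤ (p' + 2) ^ (a' + 1) * (a' + p' + 3) * (b' + 3) := by
                have : (b' + 2 + 1) = b' + 3 := by ring
                rw [this]; exact Nat.mul_le_mul_right _ hc1
            _ < (p' + 2) ^ (a' + 2) * 1 * ((a' + 2 + (b' + 2)).choose (a' + 2)) + (a' + 2 + (b' + 2)) := by
                rw [mul_one, epow]
                have hM' := chooseB' (a' + 2) (b' + 2) (by omega) (by omega)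
                have hkey : (a' + p' + 3) * (b' + 3) ≤ (p' + 2) * ((a' + 2) * (b' + 2) + 2) := by
                  nlinarith [Nat.zero_le (p' * a' * b'), Nat.zero_le (p' * a'), Nat.zero_le (p' * b'),
                    Nat.zero_le (a' * b'), Nat.zero_le p', Nat.zero_le a', Nat.zero_le b']
                calc (p' + 2) ^ (a' + 1) * (a' + p' + 3) * (b' + 3)
                    = (p' + 2) ^ (a' + 1) * ((a' + p' + 3) * (b' + 3)) := by ring
                  _ ≤ (p' + 2) ^ (a' + 1) * ((p' + 2) * ((a' + 2) * (b' + 2) + 2)) :=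
                      Nat.mul_le_mul_left _ hkey
                  _ = (p' + 2) ^ (a' + 1) * (p' + 2) * ((a' + 2) * (b' + 2) + 2) := by ring
                  _ ≤ (p' + 2) ^ (a' + 1) * (p' + 2) * ((a' + 2 + (b' + 2)).choose (a' + 2)) :=
                      Nat.mul_le_mul_left _ hM'
                  _ < _ + (a' + 2 + (b' + 2)) := by omega
        · -- q ≥ 2 (p ≥ 1 arbitrary)
          have hc1 := chooseA a p ha hp
          have hc2 := chooseA' b q hb2 hq2
          obtain ⟨a', rfl⟩ : ∃ a', a = a' + 2 := ⟨a - 2, by omega⟩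
          obtain ⟨b', rfl⟩ : ∃ b', b = b' + 2 := ⟨b - 2, by omega⟩
          obtain ⟨q', rfl⟩ : ∃ q', q = q' + 2 := ⟨q - 2, by omega⟩
          obtain ⟨p', rfl⟩ : ∃ p', p = p' + 1 := ⟨p - 1, by omega⟩
          have e1 : (a' + 2 : ℕ) - 1 = a' + 1 := by omega
          have e2 : (b' + 2 : ℕ) - 1 = b' + 1 := by omega
          have e3 : b' + 2 + (q' + 2) - 1 = b' + q' + 3 := by omega
          rw [e1] at hc1
          rw [e2, e3] at hc2
          have epowp : (p' + 1) ^ (a' + 2) = (p' + 1) ^ (a' + 1) * (p' + 1) := pow_succ _ _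
          have epowq : (q' + 2) ^ (b' + 2) = (q' + 2) ^ (b' + 1) * (q' + 2) := pow_succ _ _
          have hM' := chooseB' (a' + 2) (b' + 2) (by omega) (by omega)
          calc (a' + 2 + (p' + 1)).choose (a' + 2) * ((b' + 2 + (q' + 2)).choose (b' + 2))
              ≤ ((p' + 1) ^ (a' + 1) * (a' + 2 + (p' + 1))) * ((q' + 2) ^ (b' + 1) * (b' + q' + 3)) :=
                Nat.mul_le_mul hc1 hc2
            _ ≤ (p' + 1) ^ (a' + 2) * (q' + 2) ^ (b' + 2) * ((a' + 2) * (b' + 2) + 2) := by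
                rw [epowp, epowq]
                have hkey : (a' + 2 + (p' + 1)) * (b' + q' + 3)
                    ≤ (p' + 1) * (q' + 2) * ((a' + 2) * (b' + 2) + 2) := by
                  linarith [Nat.zero_le (p' * q' * a' * b'), Nat.zero_le (p' * q' * a'),
                    Nat.zero_le (p' * q' * b'), Nat.zero_le (p' * a' * b'), Nat.zero_le (q' * a' * b'),
                    Nat.zero_le (p' * q'), Nat.zero_le (p' * a'), Nat.zero_le (p' * b'),
                    Nat.zero_le (q' * a'), Nat.zero_le (q' * b'), Nat.zero_le (a' * b'),
                    Nat.zero_le p', Nat.zero_le q', Nat.zero_le a', Nat.zero_le b']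
                calc ((p' + 1) ^ (a' + 1) * (a' + 2 + (p' + 1))) * ((q' + 2) ^ (b' + 1) * (b' + q' + 3))
                    = (p' + 1) ^ (a' + 1) * (q' + 2) ^ (b' + 1) *
                        ((a' + 2 + (p' + 1)) * (b' + q' + 3)) := by ring
                  _ ≤ (p' + 1) ^ (a' + 1) * (q' + 2) ^ (b' + 1) *
                        ((p' + 1) * (q' + 2) * ((a' + 2) * (b' + 2) + 2)) :=
                      Nat.mul_le_mul_left _ hkey
                  _ = (p' + 1) ^ (a' + 1) * (p' + 1) * ((q' + 2) ^ (b' + 1) * (q' + 2)) *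
                        ((a' + 2) * (b' + 2) + 2) := by ring
            _ ≤ (p' + 1) ^ (a' + 2) * (q' + 2) ^ (b' + 2) * ((a' + 2 + (b' + 2)).choose (a' + 2)) :=
                Nat.mul_le_mul_left _ hM'
            _ < _ + (a' + 2 + (b' + 2)) := by
                have : 0 < a' + 2 + (b' + 2) := by omega
                omega


lemma baseEq2 (a q : ℕ) :
    (a + 1).choose a * ((1 + q).choose 1) = 1 ^ a * q ^ 1 * ((a + 1).choose a) + (a + 1) := by
  rw [Nat.choose_one_right, Nat.choose_succ_self_right]
  ring

lemma baseLe (a b p q : ℕ) (ha : 1 ≤ a) (hb : 1 ≤ b) (hp : 1 ≤ p) (hq : 1 ≤ q) :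
    (a + p).choose a * ((b + q).choose b) ≤ p ^ a * q ^ b * ((a + b).choose a) + (a + b) := by
  by_cases hpat : (a = 1 ∧ q = 1) ∨ (b = 1 ∧ p = 1)
  · rcases hpat with ⟨rfl, rfl⟩ | ⟨rfl, rfl⟩
    · exact le_of_eq (baseEq b p)
    · exact le_of_eq (baseEq2 a q)
  · exact le_of_lt (baseStrict a b p q ha hb hp hq hpat)

lemma multinomial_pair {ι : Type*} [DecidableEq ι] (x y : ι) (h : x ≠ y) (f : ι → ℕ) :
    Nat.multinomial {x, y} f = (f x + f y).choose (f x) := by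
  have hx : x ∉ ({y} : Finset ι) := by simp [h]
  rw [show ({x, y} : Finset ι) = insert x {y} from rfl, Nat.multinomial_insert hx,
    Nat.multinomial_singleton, Finset.sum_singleton, mul_one]

lemma sum_ge_card {ι : Type*} (s : Finset ι) (f : ι → ℕ) (hf : ∀ i ∈ s, 1 ≤ f i) :
    s.card ≤ ∑ i ∈ s, f i := by
  calc s.card = ∑ i ∈ s, 1 := by rw [Finset.card_eq_sum_ones]
    _ ≤ ∑ i ∈ s, f i := Finset.sum_le_sum hf

lemma multinomial_ge_sum {ι : Type*} [DecidableEq ι] (s : Finset ι) (f : ι → ℕ)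
    (hcard : 2 ≤ s.card) (hf : ∀ i ∈ s, 1 ≤ f i) :
    ∑ i ∈ s, f i ≤ Nat.multinomial s f := by
  obtain ⟨x, hx⟩ := Finset.card_pos.mp (show 0 < s.card by omega)
  have hxt : x ∉ s.erase x := Finset.notMem_erase x s
  have hins : insert x (s.erase x) = s := Finset.insert_erase hx
  have hcardt : 1 ≤ (s.erase x).card := by rw [Finset.card_erase_of_mem hx]; omega
  have hsum_t : 1 ≤ ∑ i ∈ s.erase x, f i := by
    calc 1 ≤ (s.erase x).card := hcardt
      _ ≤ ∑ i ∈ s.erase x, f i :=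
        sum_ge_card _ f (fun i hi => hf i (Finset.mem_of_mem_erase hi))
  rw [← hins, Nat.multinomial_insert hxt, Finset.sum_insert hxt]
  have hc := chooseB (f x) (∑ i ∈ s.erase x, f i) (hf x hx) hsum_t
  have hmt := Nat.multinomial_pos (s.erase x) f
  have hfx : 1 ≤ f x := hf x hx
  have h1 : f x + ∑ i ∈ s.erase x, f i ≤ f x * (∑ i ∈ s.erase x, f i) + 1 := by
    obtain ⟨a, ha⟩ : ∃ a, f x = a + 1 := ⟨f x - 1, by omega⟩
    obtain ⟨b, hb⟩ : ∃ b, ∑ i ∈ s.erase x, f i = b + 1 := ⟨(∑ i ∈ s.erase x, f i) - 1, by omega⟩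
    rw [ha, hb]
    linarith [Nat.zero_le (a * b)]
  calc f x + ∑ i ∈ s.erase x, f i
      ≤ f x * (∑ i ∈ s.erase x, f i) + 1 := h1
    _ ≤ (f x + ∑ i ∈ s.erase x, f i).choose (f x) := hc
    _ ≤ (f x + ∑ i ∈ s.erase x, f i).choose (f x) * Nat.multinomial (s.erase x) f :=
        Nat.le_mul_of_pos_right _ hmt

lemma choose2ge (m : ℕ) (hm : 2 ≤ m) : 2 * (m + 1) ≤ (m + 2).choose m := by
  have hsymm : (m + 2).choose (m + 2 - m) = (m + 2).choose m := Nat.choose_symm (by omega)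
  have e : m + 2 - m = 2 := by omega
  rw [e] at hsymm
  have h2 := choose_two m
  obtain ⟨m', rfl⟩ : ∃ m', m = m' + 2 := ⟨m - 2, by omega⟩
  rw [← hsymm]
  linarith [Nat.zero_le (m' * (m' + 3)), h2, Nat.zero_le ((m' + 2 + 2).choose 2)]

lemma stepStrict {ι : Type*} [DecidableEq ι] (t : Finset ι) (j : ι) (hj : j ∉ t) (n d : ι → ℕ)
    (hn : ∀ i ∈ insert j t, 1 ≤ n i) (hd : ∀ i ∈ insert j t, 1 ≤ d i)
    (hcard : 2 ≤ t.card)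
    (IH : ∏ i ∈ t, (n i + d i).choose (n i)
        ≤ (∏ i ∈ t, d i ^ n i) * Nat.multinomial t n + ∑ i ∈ t, n i) :
    ∏ i ∈ insert j t, (n i + d i).choose (n i)
      < (∏ i ∈ insert j t, d i ^ n i) * Nat.multinomial (insert j t) n
        + ∑ i ∈ insert j t, n i := by
  have hnj : 1 ≤ n j := hn j (Finset.mem_insert_self j t)
  have hdj : 1 ≤ d j := hd j (Finset.mem_insert_self j t)
  have hnt : ∀ i ∈ t, 1 ≤ n i := fun i hi => hn i (Finset.mem_insert_of_mem hi)
  rw [Finset.prod_insert hj, Finset.prod_insert hj, Finset.sum_insert hj,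
    Nat.multinomial_insert hj]
  set c := (n j + d j).choose (n j) with hc
  set Ct := ∏ i ∈ t, (n i + d i).choose (n i) with hCt
  set Pt := ∏ i ∈ t, d i ^ n i with hPt
  set Mt := Nat.multinomial t n with hMt
  set Nt := ∑ i ∈ t, n i with hNt
  -- goal : c * Ct < d j ^ n j * Pt * ((n j + Nt).choose (n j) * Mt) + (n j + Nt)
  have hNt2 : 2 ≤ Nt := le_trans hcard (sum_ge_card t n hnt)
  have hMtNt : Nt ≤ Mt := multinomial_ge_sum t n hcard hnt
  have hPt1 : 0 < Pt := Finset.prod_pos (fun i hi => pow_pos (hd i (Finset.mem_insert_of_mem hi)) _)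
  have hX2 : 2 ≤ Pt * Mt := le_trans (le_trans hNt2 hMtNt) (Nat.le_mul_of_pos_left _ hPt1)
  have h1 : c * Ct ≤ c * (Pt * Mt) + c * Nt := by
    calc c * Ct ≤ c * ((Pt * Mt) + Nt) := Nat.mul_le_mul_left _ IH
      _ = c * (Pt * Mt) + c * Nt := by ring
  rcases Nat.lt_or_ge (n j) 2 with hnj2 | hnj2
  · -- n j = 1
    have hnj1 : n j = 1 := by omega
    have hceq : c = 1 + d j := by rw [hc, hnj1, Nat.choose_one_right]
    rw [hceq] at h1
    rw [hnj1, hceq]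
    have hK : (1 + Nt).choose 1 = 1 + Nt := Nat.choose_one_right _
    rw [hK]
    have key : (1 + d j) * (Pt * Mt) + (1 + d j) * Nt < d j * ((1 + Nt) * (Pt * Mt)) + (1 + Nt) := by
      obtain ⟨X, hXe⟩ : ∃ X, Pt * Mt = X + 2 := ⟨Pt * Mt - 2, by omega⟩
      obtain ⟨D, hDe⟩ : ∃ D, d j = D + 1 := ⟨d j - 1, by omega⟩
      obtain ⟨N2, hNe⟩ : ∃ N2, Nt = N2 + 2 := ⟨Nt - 2, by omega⟩
      rw [hXe, hDe, hNe]
      nlinarith [Nat.zero_le (D * N2 * X), Nat.zero_le (D * X), Nat.zero_le (D * N2),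
        Nat.zero_le (N2 * X), Nat.zero_le X, Nat.zero_le D, Nat.zero_le N2]
    calc (1 + d j) * Ct ≤ (1 + d j) * (Pt * Mt) + (1 + d j) * Nt := h1
      _ < d j * ((1 + Nt) * (Pt * Mt)) + (1 + Nt) := key
      _ = d j ^ 1 * Pt * ((1 + Nt) * Mt) + (1 + Nt) := by ring
  · -- n j ≥ 2
    have hA : c ≤ d j ^ (n j) * (n j + 1) := by
      have h := chooseA (n j) (d j) hnj hdj
      have e : d j ^ n j = d j ^ (n j - 1) * d j := by
        conv_lhs => rw [show n j = (n j - 1) + 1 by omega]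
        rw [pow_succ]
      calc c ≤ d j ^ (n j - 1) * (n j + d j) := h
        _ ≤ d j ^ (n j - 1) * (d j * (n j + 1)) := by
            apply Nat.mul_le_mul_left
            obtain ⟨D, hDe⟩ : ∃ D, d j = D + 1 := ⟨d j - 1, by omega⟩
            rw [hDe]
            linarith [Nat.zero_le (D * n j), Nat.zero_le D]
        _ = d j ^ (n j) * (n j + 1) := by rw [e]; ring
    have hK : 2 * (n j + 1) ≤ (n j + Nt).choose (n j) := by
      calc 2 * (n j + 1) ≤ (n j + 2).choose (n j) := choose2ge (n j) hnj2
        _ ≤ (n j + Nt).choose (n j) := Nat.choose_le_choose _ (by omega)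
    calc c * Ct ≤ c * (Pt * Mt) + c * Nt := h1
      _ ≤ c * (Pt * Mt) + c * (Pt * Mt) := by
          have : c * Nt ≤ c * (Pt * Mt) :=
            Nat.mul_le_mul_left _ (le_trans hMtNt (Nat.le_mul_of_pos_left _ hPt1))
          omega
      _ = 2 * c * (Pt * Mt) := by ring
      _ ≤ 2 * (d j ^ (n j) * (n j + 1)) * (Pt * Mt) :=
          Nat.mul_le_mul_right _ (Nat.mul_le_mul_left _ hA)
      _ = d j ^ (n j) * (2 * (n j + 1)) * (Pt * Mt) := by ring
      _ ≤ d j ^ (n j) * ((n j + Nt).choose (n j)) * (Pt * Mt) :=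
          Nat.mul_le_mul_right _ (Nat.mul_le_mul_left _ hK)
      _ = d j ^ n j * Pt * ((n j + Nt).choose (n j) * Mt) := by ring
      _ < d j ^ n j * Pt * ((n j + Nt).choose (n j) * Mt) + (n j + Nt) := by omega

lemma mainIneq {ι : Type*} [DecidableEq ι] :
    ∀ (m : ℕ) (s : Finset ι) (n d : ι → ℕ), s.card = m → 2 ≤ m →
    (∀ i ∈ s, 1 ≤ n i) → (∀ i ∈ s, 1 ≤ d i) →
    ∏ i ∈ s, (n i + d i).choose (n i)
      ≤ (∏ i ∈ s, d i ^ n i) * Nat.multinomial s n + ∑ i ∈ s, n i := by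
  intro m
  induction m with
  | zero => omega
  | succ m ih =>
    intro s n d hcard hm hn hd
    rcases Nat.lt_or_ge m 2 with hm2 | hm2
    · -- m + 1 = 2
      have h2 : s.card = 2 := by omega
      obtain ⟨x, y, hxy, rfl⟩ := Finset.card_eq_two.mp h2
      have hx : x ∉ ({y} : Finset ι) := by simp [hxy]
      rw [show ({x, y} : Finset ι) = insert x {y} from rfl]
      rw [Finset.prod_insert hx, Finset.prod_insert hx, Finset.sum_insert hx,
        Finset.prod_singleton, Finset.prod_singleton, Finset.sum_singleton,
        show insert x ({y} : Finset ι) = {x, y} from rfl, multinomial_pair x y hxy]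
      have hnx := hn x (by simp); have hny := hn y (by simp)
      have hdx := hd x (by simp); have hdy := hd y (by simp)
      calc (n x + d x).choose (n x) * ((n y + d y).choose (n y))
          ≤ d x ^ n x * (d y ^ n y) * ((n x + n y).choose (n x)) + (n x + n y) :=
            baseLe (n x) (n y) (d x) (d y) hnx hny hdx hdy
        _ = d x ^ n x * d y ^ n y * ((n x + n y).choose (n x)) + (n x + n y) := by ring
    · -- m ≥ 2, card = m + 1 ≥ 3
      obtain ⟨j, hjs⟩ := Finset.card_pos.mp (show 0 < s.card by omega)
      have hins : insert j (s.erase j) = s := Finset.insert_erase hjs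
      have hjt : j ∉ s.erase j := Finset.notMem_erase j s
      have hct : (s.erase j).card = m := by rw [Finset.card_erase_of_mem hjs]; omega
      have IH := ih (s.erase j) n d hct hm2
        (fun i hi => hn i (Finset.mem_of_mem_erase hi))
        (fun i hi => hd i (Finset.mem_of_mem_erase hi))
      rw [← hins]
      exact le_of_lt (stepStrict (s.erase j) j hjt n d
        (by rw [hins]; exact hn) (by rw [hins]; exact hd) (by omega) IH)

lemma strictIneq {ι : Type*} [DecidableEq ι] (s : Finset ι) (n d : ι → ℕ)
    (hcard : 3 ≤ s.card) (hn : ∀ i ∈ s, 1 ≤ n i) (hd : ∀ i ∈ s, 1 ≤ d i) :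
    ∏ i ∈ s, (n i + d i).choose (n i)
      < (∏ i ∈ s, d i ^ n i) * Nat.multinomial s n + ∑ i ∈ s, n i := by
  obtain ⟨j, hjs⟩ := Finset.card_pos.mp (show 0 < s.card by omega)
  have hins : insert j (s.erase j) = s := Finset.insert_erase hjs
  have hjt : j ∉ s.erase j := Finset.notMem_erase j s
  have hct : (s.erase j).card = s.card - 1 := Finset.card_erase_of_mem hjs
  have IH := mainIneq (s.card - 1) (s.erase j) n d hct (by omega)
    (fun i hi => hn i (Finset.mem_of_mem_erase hi))
    (fun i hi => hd i (Finset.mem_of_mem_erase hi))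
  rw [← hins]
  exact stepStrict (s.erase j) j hjt n d
    (by rw [hins]; exact hn) (by rw [hins]; exact hd) (by omega) IH

/-- Diophantine characterization of Segre–Veronese varieties of minimal degree:
for `k ≥ 2` and positive integers `nᵢ, dᵢ`, the degree
`∏ dᵢ^{nᵢ} · (∑nᵢ)!/(∏ nᵢ!)` equals `1 + codim = ∏ C(nᵢ+dᵢ,nᵢ) − ∑nᵢ` if and
only if `k = 2` and either (`n₁ = 1` and `d₂ = 1`) or (`n₂ = 1` and
`d₁ = 1`). -/
theorem segre_veronese_minimal_degree_iff (k : ℕ) (hk : 2 ≤ k)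
    (n d : Fin k → ℕ) (hn : ∀ i, 1 ≤ n i) (hd : ∀ i, 1 ≤ d i) :
    ((∏ i, (d i : ℤ) ^ n i) * (Nat.factorial (∑ i, n i) : ℤ)
        = (∏ i, (Nat.factorial (n i) : ℤ)) *
          ((∏ i, ((n i + d i).choose (n i) : ℤ)) - (∑ i, (n i : ℤ)))) ↔
    (k = 2 ∧ ((n ⟨0, by omega⟩ = 1 ∧ d ⟨1, by omega⟩ = 1) ∨
              (n ⟨1, by omega⟩ = 1 ∧ d ⟨0, by omega⟩ = 1))) := by
  have spec := Nat.multinomial_spec (Finset.univ : Finset (Fin k)) n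
  have hFZ : ((∏ i, (n i).factorial : ℕ) : ℤ) ≠ 0 := by
    have : 0 < ∏ i, (n i).factorial := Finset.prod_pos (fun i _ => Nat.factorial_pos _)
    exact_mod_cast this.ne'
  have eP : (∏ i, (d i : ℤ) ^ n i) = ((∏ i, d i ^ n i : ℕ) : ℤ) := by push_cast; rfl
  have eC : (∏ i, ((n i + d i).choose (n i) : ℤ)) = ((∏ i, (n i + d i).choose (n i) : ℕ) : ℤ) := by
    push_cast; rfl
  have eF : (∏ i, ((n i).factorial : ℤ)) = ((∏ i, (n i).factorial : ℕ) : ℤ) := by push_cast; rfl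
  have eN : (∑ i, (n i : ℤ)) = ((∑ i, n i : ℕ) : ℤ) := by push_cast; rfl
  have bridge : ((∏ i, (d i : ℤ) ^ n i) * (Nat.factorial (∑ i, n i) : ℤ)
        = (∏ i, (Nat.factorial (n i) : ℤ)) *
          ((∏ i, ((n i + d i).choose (n i) : ℤ)) - (∑ i, (n i : ℤ))))
      ↔ ((∏ i, d i ^ n i) * Nat.multinomial Finset.univ n + ∑ i, n i
          = ∏ i, (n i + d i).choose (n i)) := by
    rw [eP, eC, eF, eN, ← spec, Nat.cast_mul]
    constructor
    · intro h
      have h2 : ((∏ i, d i ^ n i : ℕ) : ℤ) * ((Nat.multinomial Finset.univ n : ℕ) : ℤ)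
          = ((∏ i, (n i + d i).choose (n i) : ℕ) : ℤ) - ((∑ i, n i : ℕ) : ℤ) :=
        mul_left_cancel₀ hFZ (by rw [← h]; ring)
      have h4 : (((∏ i, d i ^ n i) * Nat.multinomial Finset.univ n + ∑ i, n i : ℕ) : ℤ)
          = ((∏ i, (n i + d i).choose (n i) : ℕ) : ℤ) := by
        rw [Nat.cast_add, Nat.cast_mul]; linarith
      exact Nat.cast_inj.mp h4
    · intro h
      have h2 := congrArg (fun x : ℕ => (x : ℤ)) h
      simp only [Nat.cast_add, Nat.cast_mul] at h2
      rw [← h2]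
      ring
  rw [bridge]
  constructor
  · intro h
    rcases Nat.lt_or_ge k 3 with hk3 | hk3
    · -- k = 2
      have hk2 : k = 2 := by omega
      subst hk2
      refine ⟨rfl, ?_⟩
      by_contra hpat
      have hmul : Nat.multinomial (Finset.univ : Finset (Fin 2)) n
          = (n 0 + n 1).choose (n 0) := by
        rw [show (Finset.univ : Finset (Fin 2)) = {0, 1} by decide]
        exact multinomial_pair 0 1 (by decide) n
      rw [Fin.prod_univ_two, Fin.prod_univ_two, Fin.sum_univ_two, hmul] at h
      simp only [Fin.mk_zero, Fin.mk_one] at hpat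
      have := baseStrict (n 0) (n 1) (d 0) (d 1) (hn 0) (hn 1) (hd 0) (hd 1) hpat
      omega
    · -- k ≥ 3 : contradiction
      exfalso
      have hcard : 3 ≤ (Finset.univ : Finset (Fin k)).card := by
        rw [Finset.card_univ, Fintype.card_fin]; omega
      have := strictIneq (Finset.univ : Finset (Fin k)) n d hcard
        (fun i _ => hn i) (fun i _ => hd i)
      omega
  · rintro ⟨hk2, hpat⟩
    subst hk2
    have hmul : Nat.multinomial (Finset.univ : Finset (Fin 2)) n
        = (n 0 + n 1).choose (n 0) := by
      rw [show (Finset.univ : Finset (Fin 2)) = {0, 1} by decide]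
      exact multinomial_pair 0 1 (by decide) n
    rw [Fin.prod_univ_two, Fin.prod_univ_two, Fin.sum_univ_two, hmul]
    simp only [Fin.mk_zero, Fin.mk_one] at hpat
    rcases hpat with ⟨h0, h1⟩ | ⟨h0, h1⟩
    · rw [h0, h1]
      have := baseEq (n 1) (d 0)
      omega
    · rw [h0, h1]
      have := baseEq2 (n 0) (d 1)
      omega
end

section
/- Let Q ⊂ ℝ^m be a lattice polytope with vertices v₁,…,v_k that is not 2-normal, and let u ∈ (2Q) ∩ ℤ^m be a lattice point that is not a sum of two lattice points of Q. Choose r₁,…,r_k ∈ ℕ with r₁ + ⋯ + r_k > 0 and (r₁+⋯+r_k)u = 2r₁v₁ + ⋯ + 2r_kv_k. Then the Laurent polynomial f = r₁z^{2v₁} + ⋯ + r_kz^{2v_k} − (r₁+⋯+r_k)z^u is nonnegative on the positive real torus (ℝ_{>0})^m (indeed on (ℝ^*)^m) but is not a sum of squares of Laurent polynomials with Newton polytope contained in Q. -/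
/-!
Write `z^a = ∏ⱼ zⱼ^{aⱼ}`. The relation `(∑ rᵢ) u = ∑ 2 rᵢ vᵢ` says
`(z^u)^{∑ rᵢ} = ∏ᵢ (z^{2vᵢ})^{rᵢ}`, so weighted AM–GM applied to the nonnegative numbers
`z^{2vᵢ}` bounds `(∑ rᵢ) z^u` by `∑ rᵢ z^{2vᵢ}`. On the other hand every exponent occurring in a
square `g²` with Newton polytope in `Q` is a sum of two lattice points of `Q`, so the coefficient
of `z^u` in a sum of such squares is `0`, whereas in `f` it is `-(∑ rᵢ) ≠ 0`: no `2vᵢ` equals `u`,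
since `vᵢ + vᵢ ≠ u`.
-/

open scoped Pointwise

section LaurentMonomial

variable {ι σ K : Type*} [Fintype σ] [CommGroupWithZero K]

theorem zpow_finsetSum₀ {a : K} (ha : a ≠ 0) (s : Finset ι) (f : ι → ℤ) :
    a ^ (∑ i ∈ s, f i) = ∏ i ∈ s, a ^ f i := by
  classical
  induction s using Finset.induction with
  | empty => simp
  | insert _ _ h ih => rw [Finset.sum_insert h, Finset.prod_insert h, zpow_add₀ ha, ih]

theorem prod_zpow_nsmul (z : σ → K) (n : ℕ) (a : σ → ℤ) :
    ∏ j, z j ^ (n • a) j = (∏ j, z j ^ a j) ^ n := by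
  rw [← Finset.prod_pow]
  exact Finset.prod_congr rfl fun j _ => by
    rw [Pi.smul_apply, nsmul_eq_mul, mul_comm, zpow_mul, zpow_natCast]

theorem prod_zpow_finsetSum {z : σ → K} (hz : ∀ j, z j ≠ 0) (s : Finset ι) (a : ι → σ → ℤ) :
    ∏ j, z j ^ (∑ i ∈ s, a i) j = ∏ i ∈ s, ∏ j, z j ^ a i j := by
  simp only [Finset.sum_apply, zpow_finsetSum₀ (hz _)]
  exact Finset.prod_comm

end LaurentMonomial

theorem Real.sum_mul_le_sum_mul_of_pow_sum_eq_prod_pow {ι : Type*} (s : Finset ι) (w : ι → ℕ)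
    (p : ι → ℝ) (P : ℝ) (hp : ∀ i ∈ s, 0 ≤ p i) (hw : 0 < ∑ i ∈ s, w i)
    (hP : P ^ (∑ i ∈ s, w i) = ∏ i ∈ s, p i ^ w i) :
    (∑ i ∈ s, (w i : ℝ)) * P ≤ ∑ i ∈ s, w i * p i := by
  have hwR : (0 : ℝ) < ∑ i ∈ s, (w i : ℝ) := by exact_mod_cast hw
  have hgeom : (∏ i ∈ s, p i ^ (w i : ℝ)) ^ (∑ i ∈ s, (w i : ℝ))⁻¹ = |P| := by
    simp only [Real.rpow_natCast]
    rw [← hP, ← abs_of_nonneg (hP ▸ Finset.prod_nonneg fun i hi => pow_nonneg (hp i hi) _ :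
      (0 : ℝ) ≤ P ^ ∑ i ∈ s, w i), abs_pow, ← Real.rpow_natCast, ← Real.rpow_mul (abs_nonneg P),
      Nat.cast_sum, mul_inv_cancel₀ hwR.ne', Real.rpow_one]
  have hamgm := Real.geom_mean_le_arith_mean s (fun i => (w i : ℝ)) p (fun _ _ => by positivity)
    hwR hp
  rw [hgeom, le_div_iff₀ hwR] at hamgm
  nlinarith [le_abs_self P]

theorem AddMonoidAlgebra.coeff_sum_mul_self_eq_zero {ι R G : Type*} [CommSemiring R] [AddMonoid G]
    (s : Finset ι) (g : ι → AddMonoidAlgebra R G) {S : Set G}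
    (hg : ∀ i ∈ s, ∀ w ∈ (g i).coeff.support, w ∈ S) {u : G} (hu : u ∉ S + S) :
    (∑ i ∈ s, g i * g i).coeff u = 0 := by
  classical
  rw [coeff_sum, Finsupp.finsetSum_apply]
  refine Finset.sum_eq_zero fun i hi => Finsupp.notMem_support_iff.mp fun hmem => hu ?_
  obtain ⟨a, ha, b, hb, rfl⟩ := Finset.mem_add.mp (support_coeff_mul_subset _ _ hmem)
  exact Set.add_mem_add (hg i hi a ha) (hg i hi b hb)

open Finsupp in
theorem non_two_normal_gives_nonneg_not_sos_general (m k : ℕ)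
    (v : Fin k → (Fin m → ℤ)) (u : Fin m → ℤ)
    (ι : (Fin m → ℤ) → (Fin m → ℝ))
    (Q : Set (Fin m → ℝ)) (hQ : Q = convexHull ℝ (ι '' Set.range v))
    (hunotsum : ¬ ∃ a b : Fin m → ℤ, ι a ∈ Q ∧ ι b ∈ Q ∧ u = a + b)
    (r : Fin k → ℕ) (hrpos : 0 < ∑ i, r i)
    (hrel : (∑ i, r i) • u = ∑ i, (2 * r i) • v i) :
    (∀ z : Fin m → ℝ, (∀ i, z i ≠ 0) →
      0 ≤ ∑ i, (r i : ℝ) * ∏ j, z j ^ (2 * v i j)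
            - (∑ i, (r i : ℝ)) * ∏ j, z j ^ u j) ∧
    ¬ ∃ (N : ℕ) (g : Fin N → AddMonoidAlgebra ℝ (Fin m → ℤ)),
        (∀ j, ∀ w ∈ (g j).coeff.support, ι w ∈ Q) ∧
        (∑ i, Finsupp.single (2 • v i) (r i : ℝ))
            - Finsupp.single u ((∑ i, r i : ℕ) : ℝ) = (∑ j, g j * g j).coeff := by
  have hu : u ∉ ι ⁻¹' Q + ι ⁻¹' Q := fun ⟨a, ha, b, hb, hab⟩ => hunotsum ⟨a, b, ha, hb, hab.symm⟩
  constructor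
  · intro z hz
    have hdouble : ∀ i, ∏ j, z j ^ (2 * v i j) = (∏ j, z j ^ v i j) ^ 2 := fun i => by
      simpa using prod_zpow_nsmul z 2 (v i)
    refine sub_nonneg.mpr (Real.sum_mul_le_sum_mul_of_pow_sum_eq_prod_pow _ r _ _
      (fun i _ => hdouble i ▸ sq_nonneg _) hrpos ?_)
    calc (∏ j, z j ^ u j) ^ (∑ i, r i) = ∏ j, z j ^ (∑ i, (2 * r i) • v i) j := by
          rw [← prod_zpow_nsmul, hrel]
      _ = ∏ i, (∏ j, z j ^ (2 * v i j)) ^ r i := by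
          refine (prod_zpow_finsetSum hz _ _).trans (Finset.prod_congr rfl fun i _ => ?_)
          rw [mul_comm, mul_smul, prod_zpow_nsmul]
          simp only [Pi.smul_apply, nsmul_eq_mul, Nat.cast_ofNat]
  · rintro ⟨N, g, hg, hsos⟩
    have hcoeff := DFunLike.congr_fun hsos u
    have hvQ : ∀ i, v i ∈ ι ⁻¹' Q := fun i => hQ ▸ subset_convexHull ℝ _ ⟨v i, ⟨i, rfl⟩, rfl⟩
    have hdouble : ∀ i, u ≠ 2 • v i := fun i h =>
      hu (h ▸ two_nsmul (v i) ▸ Set.add_mem_add (hvQ i) (hvQ i))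
    rw [AddMonoidAlgebra.coeff_sum_mul_self_eq_zero _ _ (fun j _ => hg j) hu, Finsupp.sub_apply,
      Finsupp.finsetSum_apply, Finset.sum_eq_zero fun i _ => Finsupp.single_eq_of_ne (hdouble i),
      Finsupp.single_eq_same] at hcoeff
    have : (0 : ℝ) < ∑ i, r i := by exact_mod_cast hrpos
    linarith

open Finsupp in
/-- If `Q` is the convex hull of lattice points `v₁,…,v_k`, `u ∈ (2Q) ∩ ℤ^m` is
not a sum of two lattice points of `Q`, and `(∑rᵢ)·u = ∑ 2rᵢvᵢ` with `rᵢ ∈ ℕ`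
not all zero, then `f = ∑ rᵢ z^{2vᵢ} − (∑rᵢ) z^u` is nonnegative on the real
torus but is not a sum of squares of Laurent polynomials with Newton polytope
contained in `Q`. -/
theorem non_two_normal_gives_nonneg_not_sos (m k : ℕ)
    (v : Fin k → (Fin m → ℤ)) (u : Fin m → ℤ)
    (ι : (Fin m → ℤ) → (Fin m → ℝ)) (hι : ι = fun w i => (w i : ℝ))
    (Q : Set (Fin m → ℝ)) (hQ : Q = convexHull ℝ (ι '' Set.range v))
    (hu2Q : (2 : ℝ)⁻¹ • ι u ∈ Q)
    (hunotsum : ¬ ∃ a b : Fin m → ℤ, ι a ∈ Q ∧ ι b ∈ Q ∧ u = a + b)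
    (r : Fin k → ℕ) (hrpos : 0 < ∑ i, r i)
    (hrel : (∑ i, r i) • u = ∑ i, (2 * r i) • v i) :
    (∀ z : Fin m → ℝ, (∀ i, z i ≠ 0) →
      0 ≤ ∑ i, (r i : ℝ) * ∏ j, z j ^ (2 * v i j)
            - (∑ i, (r i : ℝ)) * ∏ j, z j ^ u j) ∧
    ¬ ∃ (N : ℕ) (g : Fin N → AddMonoidAlgebra ℝ (Fin m → ℤ)),
        (∀ j, ∀ w ∈ (g j).coeff.support, ι w ∈ Q) ∧
        (∑ i, Finsupp.single (2 • v i) (r i : ℝ))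
            - Finsupp.single u ((∑ i, r i : ℕ) : ℝ) = (∑ j, g j * g j).coeff :=
  non_two_normal_gives_nonneg_not_sos_general m k v u ι Q hQ hunotsum r hrpos hrel
end

section
/- Let S be the spectrahedral cone { ℓ ∈ W : A(ℓ) is positive semidefinite }, where W is a finite-dimensional real vector space and A: W → Sym(ℝⁿ) is a linear map to symmetric n×n matrices. If ℓ ∈ S generates an extremal ray of S and ℓ' ∈ W satisfies ker A(ℓ) ⊆ ker A(ℓ'), then A(ℓ') = λ A(ℓ) for some λ ∈ ℝ. -/
open Matrix Finset in
private lemma my_dotProduct_sum {n : ℕ} {ι : Type*} (s : Finset ι) (x : Fin n → ℝ)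
    (f : ι → (Fin n → ℝ)) : x ⬝ᵥ (∑ i ∈ s, f i) = ∑ i ∈ s, x ⬝ᵥ f i := by
  simp [dotProduct, Finset.mul_sum]
  exact Finset.sum_comm

open Matrix Finset in
private lemma my_sum_dotProduct {n : ℕ} {ι : Type*} (s : Finset ι) (x : Fin n → ℝ)
    (f : ι → (Fin n → ℝ)) : (∑ i ∈ s, f i) ⬝ᵥ x = ∑ i ∈ s, f i ⬝ᵥ x := by
  simp [dotProduct, Finset.sum_mul]
  exact Finset.sum_comm

open Matrix Finset in
private lemma my_mulVec_sum {n : ℕ} {ι : Type*} (s : Finset ι) (M : Matrix (Fin n) (Fin n) ℝ)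
    (f : ι → (Fin n → ℝ)) : M *ᵥ (∑ i ∈ s, f i) = ∑ i ∈ s, M *ᵥ f i := by
  simp only [← Matrix.mulVecLin_apply]
  exact map_sum M.mulVecLin f s

open Matrix in
private lemma my_key {n : ℕ} {M N : Matrix (Fin n) (Fin n) ℝ}
    (hM : M.PosSemidef) (hN : N.IsSymm)
    (hker : ∀ x : Fin n → ℝ, M *ᵥ x = 0 → N *ᵥ x = 0) :
    ∃ ε : ℝ, 0 < ε ∧ ∀ x : Fin n → ℝ, ε * |x ⬝ᵥ (N *ᵥ x)| ≤ x ⬝ᵥ (M *ᵥ x) := by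
  classical
  have hH : M.IsHermitian := hM.1
  set lam : Fin n → ℝ := hH.eigenvalues with hlamdef
  set v : Fin n → Fin n → ℝ := fun i => ⇑(hH.eigenvectorBasis i) with hvdef
  have hMv : ∀ i, M *ᵥ v i = lam i • v i := fun i => hH.mulVec_eigenvectorBasis i
  have hNv : ∀ i, lam i = 0 → N *ᵥ v i = 0 := fun i hi =>
    hker _ (by rw [hMv i, hi, zero_smul])
  have hlam0 : ∀ i, 0 ≤ lam i := fun i => hM.eigenvalues_nonneg i
  have hinner : ∀ (i : Fin n) (y : EuclideanSpace ℝ (Fin n)),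
      (inner ℝ (hH.eigenvectorBasis i) y : ℝ) = v i ⬝ᵥ y := by
    intro i y
    simp [PiLp.inner_apply, RCLike.inner_apply, dotProduct, hvdef, mul_comm]
  have hdot : ∀ i j, v i ⬝ᵥ v j = if i = j then 1 else 0 := by
    intro i j
    have h := hH.eigenvectorBasis.orthonormal
    rw [orthonormal_iff_ite] at h
    have h2 := hinner i (hH.eigenvectorBasis j)
    rw [h i j] at h2
    exact h2.symm
  have hrepr : ∀ x : Fin n → ℝ, x = ∑ i, (v i ⬝ᵥ x) • v i := by
    intro x
    have h := congrArg WithLp.ofLp (hH.eigenvectorBasis.sum_repr' (WithLp.toLp 2 x))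
    simp_rw [hinner] at h
    simpa [hvdef] using h.symm
  have expand : ∀ (P : Matrix (Fin n) (Fin n) ℝ) (x : Fin n → ℝ),
      x ⬝ᵥ (P *ᵥ x) = ∑ i, ∑ j, (v i ⬝ᵥ x) * (v j ⬝ᵥ x) * (v i ⬝ᵥ (P *ᵥ v j)) := by
    intro P x
    have hgen : ∀ coef : Fin n → ℝ,
        (∑ i, coef i • v i) ⬝ᵥ (P *ᵥ ∑ j, coef j • v j)
          = ∑ i, ∑ j, coef i * coef j * (v i ⬝ᵥ (P *ᵥ v j)) := by
      intro coef
      rw [my_mulVec_sum, my_sum_dotProduct]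
      refine Finset.sum_congr rfl fun i _ => ?_
      rw [smul_dotProduct, my_dotProduct_sum, smul_eq_mul, Finset.mul_sum]
      refine Finset.sum_congr rfl fun j _ => ?_
      rw [mulVec_smul, dotProduct_smul, smul_eq_mul]
      ring
    calc x ⬝ᵥ (P *ᵥ x)
        = (∑ i, (v i ⬝ᵥ x) • v i) ⬝ᵥ (P *ᵥ ∑ j, (v j ⬝ᵥ x) • v j) := by rw [← hrepr x]
      _ = ∑ i, ∑ j, (v i ⬝ᵥ x) * (v j ⬝ᵥ x) * (v i ⬝ᵥ (P *ᵥ v j)) := hgen _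
  -- quadratic form of M
  have hqM : ∀ x : Fin n → ℝ, x ⬝ᵥ (M *ᵥ x) = ∑ i, lam i * (v i ⬝ᵥ x) ^ 2 := by
    intro x
    rw [expand M x]
    refine Finset.sum_congr rfl fun i _ => ?_
    rw [Finset.sum_eq_single i]
    · rw [hMv i, dotProduct_smul, hdot]
      simp [sq]; ring
    · intro j _ hj
      rw [hMv j, dotProduct_smul, hdot]
      simp [hj.symm]
    · simp
  set S : Finset (Fin n) := Finset.univ.filter (fun i => lam i ≠ 0) with hS
  obtain ⟨c, hc0, hcle⟩ : ∃ c : ℝ, 0 < c ∧ ∀ i ∈ S, c ≤ lam i := by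
    by_cases hSn : S.Nonempty
    · refine ⟨S.inf' hSn lam, ?_, fun i hi => Finset.inf'_le lam hi⟩
      rw [Finset.lt_inf'_iff]
      intro i hi
      have : lam i ≠ 0 := (Finset.mem_filter.1 hi).2
      exact lt_of_le_of_ne (hlam0 i) (Ne.symm this)
    · exact ⟨1, one_pos, fun i hi => absurd ⟨i, hi⟩ hSn⟩
  set nmat : Fin n → Fin n → ℝ := fun i j => v i ⬝ᵥ (N *ᵥ v j) with hnm
  have hn0 : ∀ i j, lam i ≠ 0 → lam j ≠ 0 → True := fun _ _ _ _ => trivial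
  have hnzero : ∀ i j, (lam i = 0 ∨ lam j = 0) → nmat i j = 0 := by
    intro i j hij
    rcases hij with hi | hj
    · have : v i ⬝ᵥ (N *ᵥ v j) = (N *ᵥ v i) ⬝ᵥ v j := by
        rw [dotProduct_mulVec, ← mulVec_transpose, hN.eq]
      rw [hnm]; simp only []
      rw [this, hNv i hi, zero_dotProduct]
    · rw [hnm]; simp only []
      rw [hNv j hj, dotProduct_zero]
  set K : ℝ := ∑ i, ∑ j, |nmat i j| with hK
  have hK0 : 0 ≤ K := Finset.sum_nonneg fun i _ => Finset.sum_nonneg fun j _ => abs_nonneg _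
  refine ⟨c / (K + 1), div_pos hc0 (by linarith), fun x => ?_⟩
  set a : Fin n → ℝ := fun i => v i ⬝ᵥ x with ha
  set r : ℝ := ∑ i ∈ S, (a i) ^ 2 with hr
  have hr0 : 0 ≤ r := Finset.sum_nonneg fun i _ => sq_nonneg _
  have hsq_le : ∀ i ∈ S, (a i) ^ 2 ≤ r :=
    fun i hi => Finset.single_le_sum (fun j _ => sq_nonneg (a j)) hi
  -- lower bound on qM
  have hMlow : c * r ≤ x ⬝ᵥ (M *ᵥ x) := by
    rw [hqM x]
    have heq : ∑ i, lam i * (a i) ^ 2 = ∑ i ∈ S, lam i * (a i) ^ 2 := by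
      rw [hS]
      exact (Finset.sum_filter_of_ne (fun i _ h => by
        intro h0; rw [h0, zero_mul] at h; exact h rfl)).symm
    rw [heq, hr, Finset.mul_sum]
    refine Finset.sum_le_sum fun i hi => ?_
    exact mul_le_mul_of_nonneg_right (hcle i hi) (sq_nonneg _)
  -- upper bound on |qN|
  have hNup : |x ⬝ᵥ (N *ᵥ x)| ≤ K * r := by
    rw [expand N x, hK, Finset.sum_mul]
    refine le_trans (Finset.abs_sum_le_sum_abs _ _) (Finset.sum_le_sum fun i _ => ?_)
    rw [Finset.sum_mul]
    refine le_trans (Finset.abs_sum_le_sum_abs _ _) (Finset.sum_le_sum fun j _ => ?_)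
    by_cases hz : nmat i j = 0
    · rw [show v i ⬝ᵥ (N *ᵥ v j) = nmat i j from rfl, hz]
      simp
    · have hiS : i ∈ S := by
        rw [hS]; refine Finset.mem_filter.2 ⟨Finset.mem_univ _, fun h0 => hz (hnzero i j (Or.inl h0))⟩
      have hjS : j ∈ S := by
        rw [hS]; refine Finset.mem_filter.2 ⟨Finset.mem_univ _, fun h0 => hz (hnzero i j (Or.inr h0))⟩
      have h1 : (a i) ^ 2 ≤ r := hsq_le i hiS
      have h2 : (a j) ^ 2 ≤ r := hsq_le j hjS
      have : |a i * a j| ≤ r := by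
        rw [abs_mul]
        nlinarith [sq_abs (a i), sq_abs (a j), sq_nonneg (|a i| - |a j|), abs_nonneg (a i), abs_nonneg (a j)]
      calc |a i * a j * nmat i j| = |a i * a j| * |nmat i j| := abs_mul _ _
        _ ≤ r * |nmat i j| := mul_le_mul_of_nonneg_right this (abs_nonneg _)
        _ = |nmat i j| * r := mul_comm _ _
  -- conclude
  have hKr : c / (K + 1) * (K * r) ≤ c * r := by
    rw [div_mul_eq_mul_div, ← mul_assoc]
    rw [div_le_iff₀ (by linarith : (0:ℝ) < K + 1)]
    nlinarith
  calc c / (K + 1) * |x ⬝ᵥ (N *ᵥ x)| ≤ c / (K + 1) * (K * r) :=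
        mul_le_mul_of_nonneg_left hNup (le_of_lt (div_pos hc0 (by linarith)))
    _ ≤ c * r := hKr
    _ ≤ x ⬝ᵥ (M *ᵥ x) := hMlow

open Matrix in
/-- Ramana–Goldman kernel characterization of extremal rays of a
spectrahedral cone `S = {ℓ : A(ℓ) is PSD}`: if `ℓ ∈ S` generates an extremal
ray of `S` and `ℓ' ∈ W` satisfies `ker A(ℓ) ⊆ ker A(ℓ')`, then
`A(ℓ') = λ·A(ℓ)` for some `λ ∈ ℝ`. -/
theorem spectrahedron_extremal_ray_kernel
    {W : Type*} [AddCommGroup W] [Module ℝ W] [FiniteDimensional ℝ W]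
    (n : ℕ) (A : W →ₗ[ℝ] Matrix (Fin n) (Fin n) ℝ)
    (hsymm : ∀ w, (A w).IsSymm)
    (ℓ : W) (hℓ : (A ℓ).PosSemidef)
    (hext : ∀ a b : W, (A a).PosSemidef → (A b).PosSemidef → ℓ = a + b →
      (∃ μ : ℝ, 0 ≤ μ ∧ a = μ • ℓ) ∧ (∃ μ : ℝ, 0 ≤ μ ∧ b = μ • ℓ))
    (ℓ' : W)
    (hker : ∀ x : Fin n → ℝ, (A ℓ).mulVec x = 0 → (A ℓ').mulVec x = 0) :
    ∃ lam : ℝ, A ℓ' = lam • A ℓ := by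
  obtain ⟨ε, hε0, hε⟩ := my_key hℓ (hsymm ℓ') hker
  set a : W := (2⁻¹ : ℝ) • ℓ + (2⁻¹ * ε) • ℓ' with hadef
  set b : W := (2⁻¹ : ℝ) • ℓ - (2⁻¹ * ε) • ℓ' with hbdef
  have hAherm : ∀ w : W, (A w).IsHermitian := by
    intro w
    have := hsymm w
    rw [Matrix.IsHermitian]
    rw [Matrix.conjTranspose]
    ext i j; simpa using congrFun (congrFun this.eq i) j
  have hAa : (A a).PosSemidef := by
    refine Matrix.PosSemidef.of_dotProduct_mulVec_nonneg ?_ ?_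
    · exact hAherm a
    · intro x
      have hform : star x ⬝ᵥ ((A a) *ᵥ x) =
          2⁻¹ * (x ⬝ᵥ ((A ℓ) *ᵥ x)) + (2⁻¹ * ε) * (x ⬝ᵥ ((A ℓ') *ᵥ x)) := by
        rw [hadef, map_add, LinearMap.map_smul, LinearMap.map_smul, add_mulVec, smul_mulVec,
          smul_mulVec, dotProduct_add, dotProduct_smul, dotProduct_smul]
        simp [smul_eq_mul]
      rw [hform]
      nlinarith [hε x, neg_abs_le (x ⬝ᵥ ((A ℓ') *ᵥ x)), le_abs_self (x ⬝ᵥ ((A ℓ') *ᵥ x)), hε0.le]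
  have hAb : (A b).PosSemidef := by
    refine Matrix.PosSemidef.of_dotProduct_mulVec_nonneg ?_ ?_
    · exact hAherm b
    · intro x
      have hform : star x ⬝ᵥ ((A b) *ᵥ x) =
          2⁻¹ * (x ⬝ᵥ ((A ℓ) *ᵥ x)) - (2⁻¹ * ε) * (x ⬝ᵥ ((A ℓ') *ᵥ x)) := by
        rw [hbdef, map_sub, LinearMap.map_smul, LinearMap.map_smul, sub_mulVec, smul_mulVec,
          smul_mulVec, dotProduct_sub, dotProduct_smul, dotProduct_smul]
        simp [smul_eq_mul]
      rw [hform]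
      nlinarith [hε x, le_abs_self (x ⬝ᵥ ((A ℓ') *ᵥ x)), hε0.le]
  have hab : ℓ = a + b := by
    rw [hadef, hbdef]
    module
  obtain ⟨⟨μ, hμ0, hμ⟩, _⟩ := hext a b hAa hAb hab
  have hAeq : (2⁻¹ : ℝ) • A ℓ + (2⁻¹ * ε) • A ℓ' = μ • A ℓ := by
    have h := congrArg A hμ
    rw [hadef] at h
    simp only [map_add, LinearMap.map_smul] at h
    exact h
  refine ⟨(μ - 2⁻¹) / (2⁻¹ * ε), ?_⟩
  have hne : (2⁻¹ * ε : ℝ) ≠ 0 := by positivity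
  have h2 : (2⁻¹ * ε) • A ℓ' = (μ - 2⁻¹) • A ℓ := by
    have := hAeq
    rw [sub_smul]
    rw [eq_sub_iff_add_eq, add_comm]
    convert this using 2
  calc A ℓ' = ((2⁻¹ * ε)⁻¹ * (2⁻¹ * ε)) • A ℓ' := by rw [inv_mul_cancel₀ hne, one_smul]
    _ = (2⁻¹ * ε)⁻¹ • ((2⁻¹ * ε) • A ℓ') := by rw [mul_smul]
    _ = (2⁻¹ * ε)⁻¹ • ((μ - 2⁻¹) • A ℓ) := by rw [h2]
    _ = ((μ - 2⁻¹) / (2⁻¹ * ε)) • A ℓ := by rw [smul_smul, div_eq_inv_mul]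
end
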